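/- Under the stated setup, if c^α_{β,γ} ≠ 0 for multi-indices α, β, γ ∈ ℕ^n, then |α| ≤ |β| + |γ|, where |α| := α_1 + ⋯ + α_n. -/
import Mathlib


open TensorProduct

noncomputable section

variable {k : Type*} [Field k] {n : ℕ}

/-- The coefficient-extraction linear map `k[u₁,…,u_n] → k`. -/
def lcoeffMv (k : Type*) [CommSemiring k] {n : ℕ} (β : Fin n →₀ ℕ) :
    MvPolynomial (Fin n) k →ₗ[k] k where
  toFun p := MvPolynomial.coeff β p
  map_add' p q := MvPolynomial.coeff_add β p q
  map_smul' c p := by simp [MvPolynomial.coeff_smul]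

/-- The coefficient `c^α_{β,γ}` of `u^β ⊗ u^γ` in `μ(u^α)`. -/
def cCoef (μ : MvPolynomial (Fin n) k →ₐ[k] MvPolynomial (Fin n) k ⊗[k] MvPolynomial (Fin n) k)
    (α β γ : Fin n →₀ ℕ) : k :=
  TensorProduct.lid k k
    (TensorProduct.map (lcoeffMv k β) (lcoeffMv k γ) (μ (MvPolynomial.monomial α 1)))

namespace Statement15Aux

open Pointwise

/-- The coefficient functional on the tensor square. -/
def Lmap (k : Type*) [Field k] {n : ℕ} (β γ : Fin n →₀ ℕ) :
    MvPolynomial (Fin n) k ⊗[k] MvPolynomial (Fin n) k →ₗ[k] k :=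
  (TensorProduct.lid k k).toLinearMap ∘ₗ TensorProduct.map (lcoeffMv k β) (lcoeffMv k γ)

lemma Lmap_tmul (β γ : Fin n →₀ ℕ) (p q : MvPolynomial (Fin n) k) :
    Lmap k β γ (p ⊗ₜ[k] q) = MvPolynomial.coeff β p * MvPolynomial.coeff γ q := by
  simp [Lmap, lcoeffMv, smul_eq_mul]

/-- Monomial tensors of total degree at least `d`. -/
def Sset (k : Type*) [Field k] (n d : ℕ) :
    Set (MvPolynomial (Fin n) k ⊗[k] MvPolynomial (Fin n) k) :=
  {x | ∃ β γ : Fin n →₀ ℕ, d ≤ ∑ i, β i + ∑ i, γ i ∧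
    x = (MvPolynomial.monomial β (1 : k)) ⊗ₜ[k] (MvPolynomial.monomial γ (1 : k))}

/-- Span of monomial tensors of total degree at least `d`. -/
def M (k : Type*) [Field k] (n d : ℕ) :
    Submodule k (MvPolynomial (Fin n) k ⊗[k] MvPolynomial (Fin n) k) :=
  Submodule.span k (Sset k n d)

lemma one_le_sum_add {β γ : Fin n →₀ ℕ} (h : ¬(β = 0 ∧ γ = 0)) :
    1 ≤ ∑ i, β i + ∑ i, γ i := by
  have key : ∀ δ : Fin n →₀ ℕ, δ ≠ 0 → 1 ≤ ∑ i, δ i := by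
    intro δ hδ
    obtain ⟨i, hi⟩ := Finsupp.ne_iff.1 hδ
    simp only [Finsupp.coe_zero, Pi.zero_apply] at hi
    calc 1 ≤ δ i := Nat.one_le_iff_ne_zero.2 hi
      _ ≤ ∑ j, δ j := Finset.single_le_sum (fun _ _ => Nat.zero_le _) (Finset.mem_univ i)
  rcases not_and_or.1 h with hβ | hγ
  · exact le_add_right (key β hβ)
  · exact le_add_left (key γ hγ)

lemma sub_mem_M_one (x : MvPolynomial (Fin n) k ⊗[k] MvPolynomial (Fin n) k) :
    x - (Lmap k 0 0 x) • ((1 : MvPolynomial (Fin n) k) ⊗ₜ[k] (1 : MvPolynomial (Fin n) k))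
      ∈ M k n 1 := by
  induction x using TensorProduct.induction_on with
  | zero => simpa using (M k n 1).zero_mem
  | add x y hx hy =>
      have := (M k n 1).add_mem hx hy
      rw [map_add, add_smul] at *
      convert this using 1
      abel
  | tmul p q =>
      classical
      set F : (Fin n →₀ ℕ) × (Fin n →₀ ℕ) → MvPolynomial (Fin n) k ⊗[k] MvPolynomial (Fin n) k :=
        fun bc => (MvPolynomial.coeff bc.1 p * MvPolynomial.coeff bc.2 q) •
          ((MvPolynomial.monomial bc.1 (1 : k)) ⊗ₜ[k] (MvPolynomial.monomial bc.2 (1 : k)))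
        with hF
      have hdecomp : p ⊗ₜ[k] q = ∑ bc ∈ p.support ×ˢ q.support, F bc := by
        conv_lhs => rw [MvPolynomial.as_sum p, MvPolynomial.as_sum q]
        rw [TensorProduct.sum_tmul, Finset.sum_product]
        refine Finset.sum_congr rfl fun v _ => ?_
        rw [TensorProduct.tmul_sum]
        refine Finset.sum_congr rfl fun w _ => ?_
        have h1 : MvPolynomial.monomial v (MvPolynomial.coeff v p)
            = (MvPolynomial.coeff v p) • MvPolynomial.monomial v (1 : k) := by
          rw [MvPolynomial.smul_monomial, smul_eq_mul, mul_one]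
        have h2 : MvPolynomial.monomial w (MvPolynomial.coeff w q)
            = (MvPolynomial.coeff w q) • MvPolynomial.monomial w (1 : k) := by
          rw [MvPolynomial.smul_monomial, smul_eq_mul, mul_one]
        rw [h1, h2]
        simp only [← TensorProduct.smul_tmul', TensorProduct.tmul_smul, smul_smul, hF]
        rw [mul_comm]
      set s : Finset ((Fin n →₀ ℕ) × (Fin n →₀ ℕ)) :=
        insert (0, 0) (p.support ×ˢ q.support) with hs
      have hsum : p ⊗ₜ[k] q = ∑ bc ∈ s, F bc := by
        rw [hdecomp, hs]
        by_cases h00 : ((0 : Fin n →₀ ℕ), (0 : Fin n →₀ ℕ)) ∈ p.support ×ˢ q.support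
        · rw [Finset.insert_eq_self.2 h00]
        · rw [Finset.sum_insert h00]
          have : F (0, 0) = 0 := by
            rcases (Finset.mem_product.not.1 h00 : _) with h'
            have : MvPolynomial.coeff 0 p * MvPolynomial.coeff 0 q = 0 := by
              rcases not_and_or.1 h' with hp | hq
              · rw [MvPolynomial.notMem_support_iff.1 hp, zero_mul]
              · rw [MvPolynomial.notMem_support_iff.1 hq, mul_zero]
            simp [hF, this]
          rw [this, zero_add]
      have hL : Lmap k 0 0 (p ⊗ₜ[k] q) • ((1 : MvPolynomial (Fin n) k) ⊗ₜ[k]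
          (1 : MvPolynomial (Fin n) k)) = F (0, 0) := by
        rw [Lmap_tmul, hF]
        simp [MvPolynomial.monomial_zero']
      rw [hL, hsum, ← Finset.sum_erase_eq_sub (Finset.mem_insert_self _ _)]
      refine Submodule.sum_mem _ fun bc hbc => ?_
      have hne : bc ≠ (0, 0) := Finset.ne_of_mem_erase hbc
      refine Submodule.smul_mem _ _ (Submodule.subset_span ?_)
      refine ⟨bc.1, bc.2, one_le_sum_add ?_, rfl⟩
      intro ⟨h1', h2'⟩
      exact hne (Prod.ext h1' h2')

lemma mem_M_one {x : MvPolynomial (Fin n) k ⊗[k] MvPolynomial (Fin n) k}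
    (hx : Lmap k 0 0 x = 0) : x ∈ M k n 1 := by
  have := sub_mem_M_one x
  rwa [hx, zero_smul, sub_zero] at this

lemma one_mem_M_zero : (1 : MvPolynomial (Fin n) k ⊗[k] MvPolynomial (Fin n) k) ∈ M k n 0 := by
  refine Submodule.subset_span ⟨0, 0, Nat.zero_le _, ?_⟩
  rw [Algebra.TensorProduct.one_def]
  simp [MvPolynomial.monomial_zero']

lemma M_mul {a b : ℕ} {x y : MvPolynomial (Fin n) k ⊗[k] MvPolynomial (Fin n) k}
    (hx : x ∈ M k n a) (hy : y ∈ M k n b) : x * y ∈ M k n (a + b) := by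
  have hmem : x * y ∈ Submodule.span k (Sset k n a * Sset k n b) := by
    rw [← Submodule.span_mul_span]
    exact Submodule.mul_mem_mul hx hy
  refine Submodule.span_le.2 ?_ hmem
  rintro z ⟨x', ⟨β, γ, hd, rfl⟩, y', ⟨β', γ', hd', rfl⟩, rfl⟩
  refine Submodule.subset_span ⟨β + β', γ + γ', ?_, ?_⟩
  · have : ∑ i, (β + β') i + ∑ i, (γ + γ') i
        = (∑ i, β i + ∑ i, γ i) + (∑ i, β' i + ∑ i, γ' i) := by
      simp only [Finsupp.add_apply, Finset.sum_add_distrib]; ring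
    rw [this]
    exact add_le_add hd hd'
  · simp only [Algebra.TensorProduct.tmul_mul_tmul, MvPolynomial.monomial_mul, one_mul]

lemma M_pow {x : MvPolynomial (Fin n) k ⊗[k] MvPolynomial (Fin n) k}
    (hx : x ∈ M k n 1) : ∀ m : ℕ, x ^ m ∈ M k n m := by
  intro m
  induction m with
  | zero => simpa using one_mem_M_zero
  | succ m ih =>
      rw [pow_succ]
      exact M_mul ih hx

lemma M_prod (t : Finset (Fin n))
    (f : Fin n → MvPolynomial (Fin n) k ⊗[k] MvPolynomial (Fin n) k) (d : Fin n → ℕ)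
    (hf : ∀ i, f i ∈ M k n (d i)) : ∏ i ∈ t, f i ∈ M k n (∑ i ∈ t, d i) := by
  classical
  induction t using Finset.induction_on with
  | empty => simpa using one_mem_M_zero
  | @insert j t hj ih =>
      rw [Finset.prod_insert hj, Finset.sum_insert hj]
      exact M_mul (hf j) ih

lemma Lmap_eq_zero_of_mem {β γ : Fin n →₀ ℕ} {d : ℕ}
    (hd : ∑ i, β i + ∑ i, γ i < d)
    {x : MvPolynomial (Fin n) k ⊗[k] MvPolynomial (Fin n) k} (hx : x ∈ M k n d) :
    Lmap k β γ x = 0 := by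
  have hker : M k n d ≤ LinearMap.ker (Lmap k β γ) := by
    refine Submodule.span_le.2 ?_
    rintro z ⟨β', γ', hd', rfl⟩
    rw [SetLike.mem_coe, LinearMap.mem_ker, Lmap_tmul,
      MvPolynomial.coeff_monomial, MvPolynomial.coeff_monomial]
    by_cases h1 : β' = β
    · by_cases h2 : γ' = γ
      · subst h1; subst h2; omega
      · simp [h2]
    · simp [h1]
  exact hker hx

end Statement15Aux

open Statement15Aux
/-- If `μ : k[u] → k[u] ⊗ k[u]` is a `k`-algebra map with
coefficients `c^α_{β,γ}` satisfying the counit conditions `c^α_{0,γ} = δ^α_γ`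
and `c^α_{β,0} = δ^α_β`, then `c^α_{β,γ} ≠ 0` implies `|α| ≤ |β| + |γ|`. -/
theorem statement15
    (μ : MvPolynomial (Fin n) k →ₐ[k] MvPolynomial (Fin n) k ⊗[k] MvPolynomial (Fin n) k)
    (h1 : ∀ α γ : Fin n →₀ ℕ, cCoef μ α 0 γ = if α = γ then 1 else 0)
    (h2 : ∀ α β : Fin n →₀ ℕ, cCoef μ α β 0 = if α = β then 1 else 0)
    (α β γ : Fin n →₀ ℕ) (h : cCoef μ α β γ ≠ 0) :
    ∑ i, α i ≤ ∑ i, β i + ∑ i, γ i := by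
  by_contra hlt
  push_neg at hlt
  -- each μ(X i) lies in M 1
  have hX : ∀ i : Fin n, μ (MvPolynomial.X i) ∈ M k n 1 := by
    intro i
    refine mem_M_one ?_
    have := h1 (Finsupp.single i 1) 0
    rw [if_neg (by simp [Finsupp.single_eq_zero])] at this
    have hXmon : (MvPolynomial.X i : MvPolynomial (Fin n) k)
        = MvPolynomial.monomial (Finsupp.single i 1) 1 := rfl
    rw [hXmon]
    exact this
  -- μ (monomial α 1) ∈ M (∑ i, α i)
  have hmono : μ (MvPolynomial.monomial α (1 : k)) ∈ M k n (∑ i, α i) := by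
    have heq : MvPolynomial.monomial α (1 : k)
        = ∏ i ∈ α.support, MvPolynomial.X i ^ α i := by
      rw [MvPolynomial.monomial_eq, MvPolynomial.C_1, one_mul, Finsupp.prod]
    have hdeg : ∑ i, α i = ∑ i ∈ α.support, α i :=
      (Finset.sum_subset (Finset.subset_univ _)
        (fun i _ hi => Finsupp.notMem_support_iff.1 hi)).symm
    rw [heq, hdeg]
    simp only [map_prod, map_pow]
    exact M_prod α.support _ (fun i => α i) (fun i => M_pow (hX i) (α i))
  have : cCoef μ α β γ = 0 := by
    have := Lmap_eq_zero_of_mem hlt hmono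
    exact this
  exact h this
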